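/- Let f(z) = z + λ and g(z) = z/(μz + 1), where λ and μ are real numbers. The semigroup generated by f and g is semidiscrete and inverse free if and only if λμ ∉ (−4, 0]. -/

import Mathlib

open Filter Topology

noncomputable section

namespace MobiusSG

/-- The extended complex plane (Riemann sphere), with the one-point
compactification topology (which agrees with the chordal topology). -/
abbrev CHat : Type := OnePoint ℂ

/-- Self-maps of the extended complex plane. -/
abbrev MoebMap : Type := CHat → CHat

/-- The chordal metric χ on the extended complex plane. -/
def chordal : CHat → CHat → ℝ
  | OnePoint.some z, OnePoint.some w =>
      2 * ‖z - w‖ /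
        (Real.sqrt (1 + ‖z‖ ^ 2) * Real.sqrt (1 + ‖w‖ ^ 2))
  | OnePoint.some z, OnePoint.infty => 2 / Real.sqrt (1 + ‖z‖ ^ 2)
  | OnePoint.infty, OnePoint.some w => 2 / Real.sqrt (1 + ‖w‖ ^ 2)
  | OnePoint.infty, OnePoint.infty => 0

/-- The Möbius transformation z ↦ (az+b)/(cz+d), as a self-map of the sphere. -/
def mobiusFun (a b c d : ℝ) : MoebMap := fun z =>
  match z with
  | OnePoint.infty =>
      if c = 0 then OnePoint.infty else OnePoint.some ((a : ℂ) / (c : ℂ))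
  | OnePoint.some z =>
      if (c : ℂ) * z + (d : ℂ) = 0 then OnePoint.infty
      else OnePoint.some (((a : ℂ) * z + (b : ℂ)) / ((c : ℂ) * z + (d : ℂ)))

/-- The group 𝓜 of real Möbius transformations z ↦ (az+b)/(cz+d), ad − bc > 0. -/
def Mob : Set MoebMap :=
  {f | ∃ a b c d : ℝ, 0 < a * d - b * c ∧ f = mobiusFun a b c d}

/-- The uniform metric χ₀ on 𝓜. -/
def mDist (f g : MoebMap) : ℝ := ⨆ z : CHat, chordal (f z) (g z)

/-- The upper half-plane ℍ, as a subset of ℂ. -/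
def UHP : Set ℂ := {z | 0 < z.im}

/-- The extended real line ℝ̄ = ℝ ∪ {∞}, as a subset of the sphere. -/
def RExt : Set CHat :=
  {p | p = OnePoint.infty ∨ ∃ x : ℝ, p = OnePoint.some (x : ℂ)}

/-- The closed upper half-plane ℍ̄ = ℍ ∪ ℝ̄, as a subset of the sphere. -/
def HBar : Set CHat :=
  {p | p = OnePoint.infty ∨ ∃ z : ℂ, 0 ≤ z.im ∧ p = OnePoint.some z}

/-- Finite part of a point of the sphere (junk value 0 at ∞). -/
def toC : CHat → ℂ
  | OnePoint.infty => 0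
  | OnePoint.some z => z

/-- The hyperbolic metric ρ on the upper half-plane. -/
def hypDist (z w : ℂ) : ℝ :=
  2 * Real.arsinh (‖z - w‖ / (2 * Real.sqrt (z.im * w.im)))

/-- A semigroup: a nonempty subset of 𝓜 closed under composition. -/
def IsSemigroupOn (S : Set MoebMap) : Prop :=
  S.Nonempty ∧ S ⊆ Mob ∧ ∀ f ∈ S, ∀ g ∈ S, f ∘ g ∈ S

/-- S is semidiscrete: the identity is not an accumulation point of S in (𝓜, χ₀). -/
def Semidiscrete (S : Set MoebMap) : Prop :=
  ¬ ∀ ε : ℝ, 0 < ε → ∃ f ∈ S, f ≠ id ∧ mDist f id < ε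

/-- S is inverse free: no member of S has its inverse in S. -/
def InverseFree (S : Set MoebMap) : Prop :=
  ∀ f ∈ S, ∀ g ∈ S, f ∘ g ≠ id

/-- Membership in the semigroup generated by F. -/
inductive GenBy (F : Set MoebMap) : MoebMap → Prop
  | base {f : MoebMap} : f ∈ F → GenBy F f
  | comp {f g : MoebMap} : GenBy F f → GenBy F g → GenBy F (f ∘ g)

/-- The semigroup generated by F: all finite compositions of members of F. -/
def semigroupGen (F : Set MoebMap) : Set MoebMap := {f | GenBy F f}

/-- Membership in the group generated (as a group) by F. -/
inductive GrpGenBy (F : Set MoebMap) : MoebMap → Prop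
  | one : GrpGenBy F id
  | base {f : MoebMap} : f ∈ F → GrpGenBy F f
  | comp {f g : MoebMap} : GrpGenBy F f → GrpGenBy F g → GrpGenBy F (f ∘ g)
  | inv {f g : MoebMap} : GrpGenBy F f → f ∘ g = id → g ∘ f = id → GrpGenBy F g

/-- The group generated (as a group) by F. -/
def groupGen (F : Set MoebMap) : Set MoebMap := {f | GrpGenBy F f}

/-- (Fs n) is a composition sequence generated by F: Fs n = f 0 ∘ f 1 ∘ ⋯ ∘ f n
with each f i ∈ F. -/
def IsCompSeq (F : Set MoebMap) (Fs : ℕ → MoebMap) : Prop :=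
  ∃ f : ℕ → MoebMap, (∀ n, f n ∈ F) ∧ Fs 0 = f 0 ∧ ∀ n, Fs (n + 1) = Fs n ∘ f (n + 1)

/-- (Fs n) is an escaping sequence: for some w ∈ ℍ the orbit (Fs n w) does not
accumulate in ℍ. -/
def Escaping (Fs : ℕ → MoebMap) : Prop :=
  ∃ w : ℂ, w ∈ UHP ∧
    ¬ ∃ z : ℂ, z ∈ UHP ∧ MapClusterPt z atTop fun n => toC (Fs n (OnePoint.some w))

/-- (Fs n) is an escaping sequence converging ideally to the point p of ℝ̄,
i.e. Fs n w → p in the chordal metric. -/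
def ConvergesIdeallyTo (Fs : ℕ → MoebMap) (p : CHat) : Prop :=
  Escaping Fs ∧ p ∈ RExt ∧
    ∃ w : ℂ, w ∈ UHP ∧
      Tendsto (fun n => chordal (Fs n (OnePoint.some w)) p) atTop (nhds 0)

/-- A discrete subset of (𝓜, χ₀). -/
def IsDiscreteSet (S : Set MoebMap) : Prop :=
  ∀ f ∈ S, ∃ ε : ℝ, 0 < ε ∧ ∀ g ∈ S, g ≠ f → ε ≤ mDist g f

/-- S is a group of Möbius maps. -/
def IsGroupOn (S : Set MoebMap) : Prop :=
  id ∈ S ∧ (∀ f ∈ S, ∀ g ∈ S, f ∘ g ∈ S) ∧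
    ∀ f ∈ S, ∃ g ∈ S, f ∘ g = id ∧ g ∘ f = id

/-- S is a cocompact Fuchsian group: a discrete group of Möbius transformations
such that ℍ/S is compact (equivalently, some compact subset of ℍ has its
S-orbit covering ℍ). -/
def IsCocompactFuchsian (S : Set MoebMap) : Prop :=
  S ⊆ Mob ∧ IsGroupOn S ∧ IsDiscreteSet S ∧
    ∃ D : Set ℂ, IsCompact D ∧ D ⊆ UHP ∧
      ∀ z ∈ UHP, ∃ g ∈ S, ∃ w ∈ D, g (OnePoint.some w) = OnePoint.some z

/-- The set S⁻¹ of inverses of members of S. -/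
def invSet (S : Set MoebMap) : Set MoebMap :=
  {g | ∃ f ∈ S, f ∘ g = id ∧ g ∘ f = id}

/-- The forward limit set Λ⁺(S): accumulation points in ℝ̄ of the orbit of i. -/
def fwdLimitSet (S : Set MoebMap) : Set CHat :=
  {p | p ∈ RExt ∧ ∀ ε : ℝ, 0 < ε →
    ∃ g ∈ S, g (OnePoint.some Complex.I) ≠ p ∧
      chordal (g (OnePoint.some Complex.I)) p < ε}

/-- The backward limit set Λ⁻(S) = Λ⁺(S⁻¹). -/
def bwdLimitSet (S : Set MoebMap) : Set CHat := fwdLimitSet (invSet S)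

/-- S is elementary: it has a finite orbit in ℍ̄. -/
def Elementary (S : Set MoebMap) : Prop :=
  ∃ p ∈ HBar, ((fun g : MoebMap => g p) '' S).Finite

/-- The segment [0,1] of ℝ̄. -/
def unitClosedSeg : Set CHat := {p | ∃ x : ℝ, 0 ≤ x ∧ x ≤ 1 ∧ p = OnePoint.some (x : ℂ)}

/-- The segment (0,1) of ℝ̄. -/
def unitOpenSeg : Set CHat := {p | ∃ x : ℝ, 0 < x ∧ x < 1 ∧ p = OnePoint.some (x : ℂ)}

/-- A closed interval of ℝ̄: a closed arc, neither a singleton nor all of ℝ̄;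
equivalently, a Möbius image of [0,1]. -/
def IsClosedInterval (J : Set CHat) : Prop := ∃ g ∈ Mob, J = g '' unitClosedSeg

/-- An open interval of ℝ̄: a Möbius image of (0,1). -/
def IsOpenInterval (J : Set CHat) : Prop := ∃ g ∈ Mob, J = g '' unitOpenSeg

/-- f maps J strictly inside itself. -/
def StrictlyInside (f : MoebMap) (J : Set CHat) : Prop := f '' J ⊆ J ∧ f '' J ≠ J

/-- 𝓜(J): the Möbius transformations mapping J within itself. -/
def MobOf (J : Set CHat) : Set MoebMap := {f | f ∈ Mob ∧ f '' J ⊆ J}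

/-- S is dense in 𝓜. -/
def DenseInMob (S : Set MoebMap) : Prop :=
  ∀ f ∈ Mob, ∀ ε : ℝ, 0 < ε → ∃ g ∈ S, mDist g f < ε

/-- The Dirichlet region of S centred at w. -/
def DirichletRegion (S : Set MoebMap) (w : ℂ) : Set ℂ :=
  {z | z ∈ UHP ∧ ∀ g ∈ S, g ≠ id → hypDist z w ≤ hypDist z (toC (g (OnePoint.some w)))}

/-- The (open) horodisc based at x ∈ ℝ̄ whose boundary horocycle passes
through w ∈ ℍ. -/
def horodisc (x : CHat) (w : ℂ) : Set ℂ :=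
  match x with
  | OnePoint.infty => {z | w.im < z.im}
  | OnePoint.some p =>
      {z | ‖
            (z - (p + Complex.I * ((‖w - p‖ ^ 2 / (2 * w.im) : ℝ) : ℂ)))‖ <
          ‖w - p‖ ^ 2 / (2 * w.im)}

/-- The forward horocyclic limit set Λ_h⁺(S): points x of Λ⁺(S) such that every
orbit meets every horodisc based at x. -/
def horocyclicFwdLimitSet (S : Set MoebMap) : Set CHat :=
  {x | x ∈ fwdLimitSet S ∧ ∀ w ∈ UHP, ∀ u ∈ UHP,
    ∃ g ∈ S, toC (g (OnePoint.some w)) ∈ horodisc x u}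

/-- The end points of an interval J of ℝ̄ (its boundary within ℝ̄). -/
def endpointsOf (J : Set CHat) : Set CHat := {p | p ∈ J ∧ p ∈ closure (RExt \ J)}

/-- S is finitely generated. -/
def FinGen (S : Set MoebMap) : Prop :=
  ∃ F : Set MoebMap, F.Finite ∧ F.Nonempty ∧ S = semigroupGen F

/-- S is exceptional: S ⊆ 𝓜(J) for a closed interval J, the members of S fixing
J setwise form a nontrivial discrete group, and some member of S outside this
group fixes an end point of J. -/
def Exceptional (S : Set MoebMap) : Prop :=
  ∃ J : Set CHat, IsClosedInterval J ∧ (∀ f ∈ S, f '' J ⊆ J) ∧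
    (∃ g ∈ {g ∈ S | g '' J = J}, g ≠ id) ∧
    IsGroupOn {g ∈ S | g '' J = J} ∧ IsDiscreteSet {g ∈ S | g '' J = J} ∧
    ∃ f ∈ S, f '' J ≠ J ∧ ∃ p ∈ endpointsOf J, f p = p

/-- f is elliptic: a nonidentity map fixing a point of ℍ. -/
def Elliptic (f : MoebMap) : Prop :=
  f ≠ id ∧ ∃ z : ℂ, z ∈ UHP ∧ f (OnePoint.some z) = OnePoint.some z

/-- f is parabolic: a nonidentity map whose only fixed point lies on ℝ̄. -/
def Parabolic (f : MoebMap) : Prop :=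
  f ≠ id ∧ ∃ p ∈ RExt, {q : CHat | f q = q} = {p}

/-- α and β are the attracting resp. repelling fixed points of the hyperbolic
map f: both lie on ℝ̄, and iterates of f attract everything except β to α. -/
def HypPair (f : MoebMap) (α β : CHat) : Prop :=
  α ≠ β ∧ α ∈ RExt ∧ β ∈ RExt ∧ f α = α ∧ f β = β ∧
    ∀ p : CHat, p ≠ β → Tendsto (fun n => chordal (f^[n] p) α) atTop (nhds 0)

/-- f is hyperbolic. -/
def Hyperbolic (f : MoebMap) : Prop := ∃ α β : CHat, HypPair f α β

/-- Difference of two points of ℝ̄ (with the usual conventions about ∞, for use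
in the cross-ratio: any factor involving ∞ is replaced by 1). -/
def dR : CHat → CHat → ℝ
  | OnePoint.some x, OnePoint.some y => x.re - y.re
  | _, _ => 1

/-- The cross ratio C(f,g) = (αf−αg)(βf−βg)/((αf−βg)(βf−αg)). -/
def crossC (αf αg βf βg : CHat) : ℝ :=
  (dR αf αg * dR βf βg) / (dR αf βg * dR βf αg)

/-- tr[f,g]: the absolute trace of the commutator F G F⁻¹ G⁻¹ of normalized
(det = 1) matrix representatives. -/
def trComm (a b c d a' b' c' d' : ℝ) : ℝ :=
  |Matrix.trace (!![a, b; c, d] * !![a', b'; c', d'] *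
    !![d, -b; -c, a] * !![d', -b'; -c', a'])|

/-- f and g (parabolic or hyperbolic, with no common fixed point, with
attracting fixed points αf, αg) are antiparallel: neither closed interval
with end points αf and αg is mapped strictly inside itself by both f and g. -/
def Antiparallel (f g : MoebMap) (αf αg : CHat) : Prop :=
  ({p : CHat | f p = p} ∩ {p : CHat | g p = p} = ∅) ∧
    ∀ J : Set CHat, IsClosedInterval J → endpointsOf J = {αf, αg} →
      ¬ (StrictlyInside f J ∧ StrictlyInside g J)

/-- G is a Schottky group of rank two. -/
def SchottkyRank2 (G : Set MoebMap) : Prop :=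
  ∃ p ∈ Mob, ∃ q ∈ Mob, ∃ A B C D : Set CHat,
    IsOpenInterval A ∧ IsOpenInterval B ∧ IsOpenInterval C ∧ IsOpenInterval D ∧
    Disjoint A B ∧ Disjoint A C ∧ Disjoint A D ∧
    Disjoint B C ∧ Disjoint B D ∧ Disjoint C D ∧
    p '' (RExt \ closure A) ⊆ B ∧ q '' (RExt \ closure C) ⊆ D ∧
    G = groupGen {p, q}

/-- S is semidiscrete and inverse free. -/
def SDIF (S : Set MoebMap) : Prop := Semidiscrete S ∧ InverseFree S

/-!
If `-4 < λμ < 0`, the map `f ∘ g` has a matrix `M` of determinant one and trace `2 + λμ = 2 cos θ`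
with `sin θ ≠ 0`, so `M^k = cos kθ · I + (sin kθ / sin θ) (M - cos θ · I)`. Dirichlet's
approximation theorem makes `kθ` arbitrarily close to `2πℤ`, so these iterates of `f ∘ g` either
equal the identity or accumulate at it. If `λμ = 0` a generator is the identity.

Conversely, if `λμ > 0` or `λμ ≤ -4`, then (after conjugating by `z ↦ -z`, so that `λ > 0`) some
point is moved by every element of the semigroup by a uniform positive chordal distance, which
rules out both accumulation at the identity and inverses. For `μ > 0` every element has a matrix
with entries `a, d ≥ 1`, `b, c ≥ 0`, `b + c ≥ min λ μ`, which bounds the displacement of `i`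
from below; for `λμ ≤ -4` the set `[λ/2, ∞] ∪ [-λ/2, 0]` of `ℝ̄` is invariant under both
generators and receives their images of `-λ`, so the orbit of `-λ` stays a positive distance
away from `-λ`.
-/

/-- The point `[P : Q]` of the sphere in homogeneous coordinates; the meaningless `[0 : 0]` is
read as `∞`. -/
def proj (P Q : ℂ) : CHat := if Q = 0 then OnePoint.infty else OnePoint.some (P / Q)

lemma proj_mul_mul {k : ℂ} (hk : k ≠ 0) (P Q : ℂ) : proj (k * P) (k * Q) = proj P Q := by
  simp only [proj, mul_eq_zero, hk, false_or, mul_div_mul_left _ _ hk]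

lemma mobiusFun_some (a b c d : ℝ) (z : ℂ) :
    mobiusFun a b c d (OnePoint.some z) = proj (a * z + b) (c * z + d) := rfl

lemma mobiusFun_infty (a b c d : ℝ) : mobiusFun a b c d OnePoint.infty = proj a c := by
  simp only [mobiusFun, proj, Complex.ofReal_eq_zero]

lemma mobiusFun_proj (a b c d : ℝ) {P Q : ℂ} (hPQ : P ≠ 0 ∨ Q ≠ 0) :
    mobiusFun a b c d (proj P Q) = proj (a * P + b * Q) (c * P + d * Q) := by
  by_cases hQ : Q = 0
  · have hP : P ≠ 0 := hPQ.resolve_right (not_not.mpr hQ)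
    rw [show proj P Q = OnePoint.infty from if_pos hQ, mobiusFun_infty, hQ, mul_zero, mul_zero,
      add_zero, add_zero, mul_comm (a : ℂ), mul_comm (c : ℂ), proj_mul_mul hP]
  · rw [proj, if_neg hQ, mobiusFun_some, ← proj_mul_mul hQ]
    congr 1 <;> field_simp

lemma mobiusFun_comp {a' b' c' d' : ℝ} (a b c d : ℝ) (hdet : a' * d' - b' * c' ≠ 0) :
    mobiusFun a b c d ∘ mobiusFun a' b' c' d' =
      mobiusFun (a * a' + b * c') (a * b' + b * d') (c * a' + d * c') (c * b' + d * d') := by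
  have hdetC : (a' : ℂ) * d' - b' * c' ≠ 0 := by exact_mod_cast hdet
  funext q
  cases q using OnePoint.rec with
  | infty =>
    have hac : (a' : ℂ) ≠ 0 ∨ (c' : ℂ) ≠ 0 := by
      by_contra! h
      exact hdetC (by rw [h.1, h.2]; ring)
    simp only [Function.comp_apply, mobiusFun_infty, mobiusFun_proj a b c d hac]
    congr 1 <;> push_cast <;> ring
  | coe z =>
    have hz : (a' : ℂ) * z + b' ≠ 0 ∨ (c' : ℂ) * z + d' ≠ 0 := by
      by_contra! h
      have hz0 : z = 0 := by
        have : ((a' : ℂ) * d' - b' * c') * z = 0 := by linear_combination d' * h.1 - b' * h.2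
        simpa [hdetC] using this
      exact hdetC (by simp only [hz0, mul_zero, zero_add] at h; rw [h.1, h.2]; ring)
    simp only [Function.comp_apply, mobiusFun_some, mobiusFun_proj a b c d hz]
    congr 1 <;> push_cast <;> ring

lemma mobiusFun_one_zero_zero_one : mobiusFun 1 0 0 1 = id := by
  funext q
  cases q using OnePoint.rec with
  | infty => simp [mobiusFun_infty, proj]
  | coe z => simp [mobiusFun_some, proj]

lemma map_neg_proj (P Q : ℂ) : (proj P Q).map Neg.neg = proj (-P) Q := by
  unfold proj
  split_ifs <;> simp [neg_div]

lemma map_neg_map_neg (q : CHat) : (q.map Neg.neg).map Neg.neg = q := by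
  cases q using OnePoint.rec <;> simp

def negConj (W : MoebMap) : MoebMap := fun q => (W (q.map Neg.neg)).map Neg.neg

lemma negConj_comp (f g : MoebMap) : negConj (f ∘ g) = negConj f ∘ negConj g := by
  funext q
  simp [negConj, map_neg_map_neg]

lemma negConj_mobiusFun (a b c d : ℝ) : negConj (mobiusFun a b c d) = mobiusFun a (-b) (-c) d := by
  funext q
  cases q using OnePoint.rec with
  | infty =>
    rw [negConj, OnePoint.map_infty, mobiusFun_infty, mobiusFun_infty, map_neg_proj,
      ← proj_mul_mul (neg_ne_zero.mpr one_ne_zero)]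
    push_cast
    ring_nf
  | coe z =>
    rw [negConj, OnePoint.map_some, mobiusFun_some, mobiusFun_some, map_neg_proj]
    push_cast
    ring_nf

lemma chordal_map_neg (p q : CHat) : chordal (p.map Neg.neg) (q.map Neg.neg) = chordal p q := by
  cases p using OnePoint.rec <;> cases q using OnePoint.rec <;>
    simp [chordal, neg_add_eq_sub, norm_sub_rev]

lemma sqrt_one_add_norm_div_sq (P : ℂ) {Q : ℂ} (hQ : Q ≠ 0) :
    √(1 + ‖P / Q‖ ^ 2) = √(‖P‖ ^ 2 + ‖Q‖ ^ 2) / ‖Q‖ := by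
  have hQ' : ‖Q‖ ≠ 0 := norm_ne_zero_iff.mpr hQ
  rw [show 1 + ‖P / Q‖ ^ 2 = (‖P‖ ^ 2 + ‖Q‖ ^ 2) / ‖Q‖ ^ 2 by rw [norm_div]; field_simp; ring,
    Real.sqrt_div' _ (sq_nonneg _), Real.sqrt_sq (norm_nonneg _)]

lemma chordal_proj_coe {P Q : ℂ} (hPQ : P ≠ 0 ∨ Q ≠ 0) (z : ℂ) :
    chordal (proj P Q) z = 2 * ‖P - z * Q‖ / (√(‖P‖ ^ 2 + ‖Q‖ ^ 2) * √(1 + ‖z‖ ^ 2)) := by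
  by_cases hQ : Q = 0
  · have hP : 0 < ‖P‖ := norm_pos_iff.mpr (hPQ.resolve_right (not_not.mpr hQ))
    rw [proj, if_pos hQ, hQ, norm_zero, mul_zero, sub_zero, zero_pow two_ne_zero, add_zero,
      Real.sqrt_sq hP.le]
    show 2 / √(1 + ‖z‖ ^ 2) = _
    field_simp
  · have hQ' : 0 < ‖Q‖ := norm_pos_iff.mpr hQ
    rw [proj, if_neg hQ]
    show 2 * ‖P / Q - z‖ / (√(1 + ‖P / Q‖ ^ 2) * √(1 + ‖z‖ ^ 2)) = _
    rw [sqrt_one_add_norm_div_sq P hQ, div_sub' hQ, norm_div]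
    field_simp

lemma chordal_proj_infty (P Q : ℂ) :
    chordal (proj P Q) OnePoint.infty = 2 * ‖Q‖ / √(‖P‖ ^ 2 + ‖Q‖ ^ 2) := by
  by_cases hQ : Q = 0
  · simp [proj, hQ, chordal]
  · rw [proj, if_neg hQ]
    show 2 / √(1 + ‖P / Q‖ ^ 2) = _
    rw [sqrt_one_add_norm_div_sq P hQ]
    field_simp

lemma norm_ofReal_mul_add_le (α β : ℝ) (z : ℂ) : ‖(α : ℂ) * z + β‖ ≤ |α| * ‖z‖ + |β| :=
  (norm_add_le _ _).trans (by simp)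

lemma chordal_mobiusFun_infty_le {a b c d η : ℝ} (hη : η ≤ 1 / 4) (ha : |a - 1| ≤ η)
    (hc : |c| ≤ η) : chordal (mobiusFun a b c d OnePoint.infty) OnePoint.infty ≤ 12 * η := by
  have ha' : 3 / 4 ≤ |a| := by
    rw [abs_of_pos (by linarith [(abs_le.mp ha).1])]
    linarith [(abs_le.mp ha).1]
  rw [mobiusFun_infty, chordal_proj_infty, Complex.norm_real, Complex.norm_real,
    Real.norm_eq_abs, Real.norm_eq_abs]
  have hS : |a| ≤ √(|a| ^ 2 + |c| ^ 2) := Real.le_sqrt_of_sq_le (by nlinarith [sq_nonneg |c|])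
  calc 2 * |c| / √(|a| ^ 2 + |c| ^ 2) ≤ 2 * |c| / |a| := by gcongr
    _ ≤ 12 * η := by
      rw [div_le_iff₀ (by linarith)]
      nlinarith [abs_nonneg c]

lemma chordal_mobiusFun_coe_le {a b c d η : ℝ} (hη : η ≤ 1 / 4) (ha : |a - 1| ≤ η)
    (hb : |b| ≤ η) (hc : |c| ≤ η) (hd : |d - 1| ≤ η) (z : ℂ) :
    chordal (mobiusFun a b c d z) z ≤ 12 * η := by
  set r := ‖z‖
  have hη0 : 0 ≤ η := (abs_nonneg b).trans hb
  have hr : 0 ≤ r := norm_nonneg z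
  set E₁ : ℂ := ((a - 1 : ℝ) : ℂ) * z + b
  set E₂ : ℂ := (c : ℂ) * z + ((d - 1 : ℝ) : ℂ)
  have hE₁ : ‖E₁‖ ≤ η * (1 + r) := by nlinarith [norm_ofReal_mul_add_le (a - 1) b z]
  have hE₂ : ‖E₂‖ ≤ η * (1 + r) := by nlinarith [norm_ofReal_mul_add_le c (d - 1) z]
  -- `(P, Q) = (z + E₁, 1 + E₂)` are homogeneous coordinates of the image of `z`
  set P : ℂ := a * z + b
  set Q : ℂ := c * z + d
  have hP : r - η * (1 + r) ≤ ‖P‖ := by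
    have h := norm_sub_norm_le z (-E₁)
    rw [norm_neg, sub_neg_eq_add, show z + E₁ = P by simp only [P, E₁]; push_cast; ring] at h
    linarith
  have hQ : 1 - η * (1 + r) ≤ ‖Q‖ := by
    have h := norm_sub_norm_le (1 : ℂ) (-E₂)
    rw [norm_neg, norm_one, sub_neg_eq_add, show 1 + E₂ = Q by simp only [Q, E₂]; push_cast; ring]
      at h
    linarith
  have hPQ : P ≠ 0 ∨ Q ≠ 0 := by
    by_contra! h
    rw [h.1, norm_zero] at hP
    rw [h.2, norm_zero] at hQ
    nlinarith
  have hnum : ‖P - z * Q‖ ≤ 2 * η * (1 + r ^ 2) := by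
    have h := norm_sub_le E₁ (z * E₂)
    rw [show E₁ - z * E₂ = P - z * Q by simp only [P, Q, E₁, E₂]; push_cast; ring, norm_mul] at h
    nlinarith [mul_le_mul_of_nonneg_left hE₂ hr, sq_nonneg (r - 1)]
  have hsum : (1 + r) / 2 ≤ ‖P‖ + ‖Q‖ := by nlinarith
  have hS : (1 + r ^ 2) / 8 ≤ ‖P‖ ^ 2 + ‖Q‖ ^ 2 := by
    nlinarith [sq_nonneg (‖P‖ - ‖Q‖), sq_nonneg (r - 1)]
  have hden : (1 + r ^ 2) / 3 ≤ √(‖P‖ ^ 2 + ‖Q‖ ^ 2) * √(1 + r ^ 2) := by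
    rw [← Real.sqrt_mul (by positivity)]
    apply Real.le_sqrt_of_sq_le
    nlinarith [mul_le_mul_of_nonneg_right hS (by positivity : (0 : ℝ) ≤ 1 + r ^ 2)]
  rw [mobiusFun_some, chordal_proj_coe hPQ, div_le_iff₀ (lt_of_lt_of_le (by positivity) hden)]
  nlinarith

lemma mDist_mobiusFun_id_le {a b c d η : ℝ} (hη : η ≤ 1 / 4) (ha : |a - 1| ≤ η) (hb : |b| ≤ η)
    (hc : |c| ≤ η) (hd : |d - 1| ≤ η) : mDist (mobiusFun a b c d) id ≤ 12 * η := by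
  refine ciSup_le fun q => ?_
  cases q using OnePoint.rec with
  | infty => exact chordal_mobiusFun_infty_le hη ha hc
  | coe z => exact chordal_mobiusFun_coe_le hη ha hb hc hd z

open Real in
lemma iterate_mobiusFun_of_trace_eq_two_cos {A B C D θ : ℝ} (hdet : A * D - B * C = 1)
    (htr : A + D = 2 * cos θ) (hθ : sin θ ≠ 0) (k : ℕ) :
    (mobiusFun A B C D)^[k] =
      mobiusFun (cos (k * θ) + sin (k * θ) / sin θ * ((A - D) / 2)) (sin (k * θ) / sin θ * B)
        (sin (k * θ) / sin θ * C) (cos (k * θ) - sin (k * θ) / sin θ * ((A - D) / 2)) := by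
  obtain rfl : D = 2 * cos θ - A := by linarith
  have hpyth := sin_sq_add_cos_sq θ
  induction k with
  | zero => simpa using mobiusFun_one_zero_zero_one.symm
  | succ k ih =>
    have hpyth' := sin_sq_add_cos_sq (k * θ)
    rw [Function.iterate_succ', ih, mobiusFun_comp]
    · push_cast
      rw [add_mul, one_mul, sin_add, cos_add]
      congr 1 <;> field_simp
      · linear_combination (-2 * sin (k * θ)) * hdet + 2 * sin (k * θ) * hpyth
      · ring
      · ring
      · linear_combination (-2 * sin (k * θ)) * hdet + 2 * sin (k * θ) * hpyth
    · refine ne_of_eq_of_ne ?_ one_ne_zero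
      field_simp
      linear_combination 4 * sin (k * θ) ^ 2 * hdet - 4 * sin (k * θ) ^ 2 * hpyth +
        4 * sin θ ^ 2 * hpyth'

open Real in
lemma exists_abs_sin_le_and_one_sub_cos_le (θ : ℝ) {δ : ℝ} (hδ : 0 < δ) :
    ∃ k : ℕ, 0 < k ∧ |sin (k * θ)| ≤ δ ∧ 1 - cos (k * θ) ≤ δ := by
  set δ' := min δ 1
  have hδ' : 0 < δ' := lt_min hδ one_pos
  obtain ⟨n, hn⟩ := exists_nat_gt (2 * π / δ')
  have hn0 : 0 < n := by exact_mod_cast (div_pos two_pi_pos hδ').trans hn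
  obtain ⟨k, hk, -, hkξ⟩ := Real.exists_nat_abs_mul_sub_round_le (θ / (2 * π)) hn0
  set x := k * θ - round (k * (θ / (2 * π))) * (2 * π)
  have hx : |x| ≤ δ' := by
    have hx' : x = (k * (θ / (2 * π)) - round (k * (θ / (2 * π)))) * (2 * π) := by
      simp only [x]; field_simp
    rw [hx', abs_mul, abs_of_pos two_pi_pos]
    calc _ ≤ 1 / (n + 1) * (2 * π) := by gcongr
      _ ≤ δ' := by
        rw [div_lt_iff₀ hδ'] at hn
        rw [one_div_mul_eq_div, div_le_iff₀ (by positivity)]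
        nlinarith
  refine ⟨k, hk, ?_, ?_⟩
  · rw [← sin_sub_int_mul_two_pi (k * θ) (round ((k : ℝ) * (θ / (2 * π))))]
    exact abs_sin_le_abs.trans (hx.trans (min_le_left _ _))
  · rw [← cos_sub_int_mul_two_pi (k * θ) (round ((k : ℝ) * (θ / (2 * π))))]
    have h1 : |x| ≤ 1 := hx.trans (min_le_right _ _)
    have h2 : x ^ 2 ≤ |x| := by rw [← sq_abs]; nlinarith [abs_nonneg x]
    nlinarith [one_sub_sq_div_two_le_cos (x := x), min_le_left δ 1]

open Real in
lemma mDist_iterate_mobiusFun_id_le {A B C D θ δ : ℝ} (hdet : A * D - B * C = 1)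
    (htr : A + D = 2 * cos θ) (hs : 0 < sin θ) {k : ℕ} (hsin : |sin (k * θ)| ≤ δ)
    (hcos : 1 - cos (k * θ) ≤ δ) (hsmall : δ * (1 + (|A - D| / 2 + |B| + |C|) / sin θ) ≤ 1 / 4) :
    mDist ((mobiusFun A B C D)^[k]) id ≤
      12 * (δ * (1 + (|A - D| / 2 + |B| + |C|) / sin θ)) := by
  have hδ : 0 ≤ δ := (abs_nonneg _).trans hsin
  set M := |A - D| / 2 + |B| + |C| with hM
  set η := δ * (1 + M / sin θ) with hη
  set p := sin (k * θ) / sin θ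
  have hp : ∀ X, 0 ≤ X → X ≤ M → |p| * X ≤ η - δ := by
    intro X hX hXM
    calc |p| * X ≤ δ / sin θ * M := by
          rw [abs_div, abs_of_pos hs]
          gcongr
      _ = η - δ := by rw [hη]; ring
  have hcos1 : |cos (k * θ) - 1| = 1 - cos (k * θ) := by
    rw [abs_sub_comm, abs_of_nonneg (by linarith [cos_le_one (k * θ)])]
  have hAD : |(A - D) / 2| = |A - D| / 2 := by rw [abs_div, abs_two]
  have hentry : ∀ σ : ℝ, |σ| = 1 → |cos (k * θ) + σ * (p * ((A - D) / 2)) - 1| ≤ η := by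
    intro σ hσ
    calc _ ≤ |cos (k * θ) - 1| + |σ * (p * ((A - D) / 2))| := by
          rw [add_sub_right_comm]; exact abs_add_le _ _
      _ ≤ δ + (η - δ) := by
          rw [hcos1, abs_mul, hσ, one_mul, abs_mul, hAD]
          gcongr
          exact hp _ (by positivity) (by linarith [abs_nonneg B, abs_nonneg C, hM])
      _ = η := by ring
  have hB : |p * B| ≤ η := by
    rw [abs_mul]
    linarith [hp _ (abs_nonneg B) (by linarith [abs_nonneg C, abs_nonneg (A - D), hM])]
  have hC : |p * C| ≤ η := by
    rw [abs_mul]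
    linarith [hp _ (abs_nonneg C) (by linarith [abs_nonneg B, abs_nonneg (A - D), hM])]
  rw [iterate_mobiusFun_of_trace_eq_two_cos hdet htr hs.ne']
  exact mDist_mobiusFun_id_le hsmall (by simpa using hentry 1 abs_one) hB hC
    (by simpa [sub_eq_add_neg] using hentry (-1) (by simp))

open Real in
lemma exists_iterate_mDist_id_lt {A B C D : ℝ} (hdet : A * D - B * C = 1) (htr : |A + D| < 2)
    {ε : ℝ} (hε : 0 < ε) : ∃ k : ℕ, 0 < k ∧ mDist ((mobiusFun A B C D)^[k]) id < ε := by
  obtain ⟨htr₁, htr₂⟩ := abs_lt.mp htr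
  set θ := arccos ((A + D) / 2)
  have hcos : A + D = 2 * cos θ := by rw [cos_arccos (by linarith) (by linarith)]; ring
  have hs : 0 < sin θ :=
    sin_pos_of_pos_of_lt_pi (arccos_pos.mpr (by linarith)) (arccos_lt_pi.mpr (by linarith))
  set K := 1 + (|A - D| / 2 + |B| + |C|) / sin θ
  have hK : 0 < K := by positivity
  set η := min (1 / 4) (ε / 13)
  have hδ : 0 < η / K := div_pos (lt_min (by norm_num) (by positivity)) hK
  have hδK : η / K * K = η := div_mul_cancel₀ _ hK.ne'
  obtain ⟨k, hk, hsin, hcos'⟩ := exists_abs_sin_le_and_one_sub_cos_le θ hδ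
  refine ⟨k, hk, ?_⟩
  calc _ ≤ 12 * (η / K * K) :=
        mDist_iterate_mobiusFun_id_le hdet hcos hs hsin hcos'
          (by show η / K * K ≤ 1 / 4; rw [hδK]; exact min_le_left _ _)
    _ < ε := by linarith [min_le_right (1 / 4 : ℝ) (ε / 13)]

lemma chordal_self (p : CHat) : chordal p p = 0 := by
  cases p using OnePoint.rec <;> simp [chordal]

lemma chordal_le_two (p q : CHat) : chordal p q ≤ 2 := by
  have h1 : ∀ z : ℂ, 1 ≤ √(1 + ‖z‖ ^ 2) := fun z => Real.le_sqrt_of_sq_le (by nlinarith)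
  cases p using OnePoint.rec <;> cases q using OnePoint.rec
  · simp [chordal]
  · exact div_le_self zero_le_two (h1 _)
  · exact div_le_self zero_le_two (h1 _)
  · rename_i z w
    show 2 * ‖z - w‖ / (√(1 + ‖z‖ ^ 2) * √(1 + ‖w‖ ^ 2)) ≤ 2
    have h2 : ‖z‖ + ‖w‖ ≤ √(1 + ‖z‖ ^ 2) * √(1 + ‖w‖ ^ 2) := by
      rw [← Real.sqrt_mul (by positivity)]
      exact Real.le_sqrt_of_sq_le (by nlinarith [sq_nonneg (1 - ‖z‖ * ‖w‖)])
    rw [div_le_iff₀ (by nlinarith [h1 z, h1 w])]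
    nlinarith [norm_sub_le z w]

lemma chordal_le_mDist (f : MoebMap) (z : CHat) : chordal (f z) z ≤ mDist f id :=
  le_ciSup (f := fun z => chordal (f z) (id z))
    ⟨2, by rintro _ ⟨w, rfl⟩; exact chordal_le_two _ _⟩ z

lemma not_inverseFree_of_id_mem {S : Set MoebMap} (h : id ∈ S) : ¬ InverseFree S :=
  fun hS => hS id h id h rfl

lemma not_sdif_of_iterate_mDist_id_lt {S : Set MoebMap} {f : MoebMap}
    (hS : ∀ k, 0 < k → f^[k] ∈ S) (h : ∀ ε > 0, ∃ k, 0 < k ∧ mDist f^[k] id < ε) : ¬ SDIF S := by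
  rintro ⟨hsd, hif⟩
  by_cases hid : ∃ k, 0 < k ∧ f^[k] = id
  · obtain ⟨k, hk, hfk⟩ := hid
    exact not_inverseFree_of_id_mem (hfk ▸ hS k hk) hif
  · push Not at hid
    refine hsd fun ε hε => ?_
    obtain ⟨k, hk, hlt⟩ := h ε hε
    exact ⟨_, hS k hk, hid k hk, hlt⟩

def HasUniformlyDisplacedPoint (S : Set MoebMap) : Prop :=
  ∃ z₀ : CHat, ∃ ε > 0, ∀ W ∈ S, ε ≤ chordal (W z₀) z₀

lemma HasUniformlyDisplacedPoint.sdif {S : Set MoebMap} (h : HasUniformlyDisplacedPoint S)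
    (hS : ∀ f ∈ S, ∀ g ∈ S, f ∘ g ∈ S) : SDIF S := by
  obtain ⟨z₀, ε, hε, hdisp⟩ := h
  refine ⟨fun hacc => ?_, fun f hf g hg hfg => ?_⟩
  · obtain ⟨f, hf, -, hlt⟩ := hacc ε hε
    linarith [hdisp f hf, chordal_le_mDist f z₀]
  · have := hdisp _ (hS f hf g hg)
    rw [hfg, id, chordal_self] at this
    linarith

lemma iterate_mem_semigroupGen {F : Set MoebMap} {f : MoebMap} (hf : f ∈ semigroupGen F)
    {k : ℕ} (hk : 0 < k) : f^[k] ∈ semigroupGen F := by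
  induction k, hk using Nat.le_induction with
  | base => exact hf
  | succ k _ ih =>
    rw [Function.iterate_succ']
    exact GenBy.comp hf ih

lemma semigroupGen_mapsTo {F : Set MoebMap} {X : Set CHat} {p : CHat}
    (hF : ∀ f ∈ F, Set.MapsTo f X X ∧ f p ∈ X) :
    ∀ W ∈ semigroupGen F, Set.MapsTo W X X ∧ W p ∈ X := by
  intro W hW
  induction hW with
  | base hf => exact hF _ hf
  | comp _ _ ihf ihg => exact ⟨ihf.1.comp ihg.1, ihf.1 ihg.2⟩

def parabolicPair (lam mu : ℝ) : Set MoebMap := {mobiusFun 1 lam 0 1, mobiusFun 1 0 mu 1}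

lemma not_inverseFree_of_mul_eq_zero {lam mu : ℝ} (h : lam * mu = 0) :
    ¬ InverseFree (semigroupGen (parabolicPair lam mu)) := by
  refine not_inverseFree_of_id_mem (GenBy.base ?_)
  rcases mul_eq_zero.mp h with rfl | rfl <;>
    simp [parabolicPair, mobiusFun_one_zero_zero_one]

lemma not_sdif_of_mul_mem_Ioo {lam mu : ℝ} (h₁ : -4 < lam * mu) (h₂ : lam * mu < 0) :
    ¬ SDIF (semigroupGen (parabolicPair lam mu)) := by
  have hH : mobiusFun 1 lam 0 1 ∘ mobiusFun 1 0 mu 1 = mobiusFun (1 + lam * mu) lam mu 1 := by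
    rw [mobiusFun_comp _ _ _ _ (by norm_num)]
    ring_nf
  have hmem : mobiusFun (1 + lam * mu) lam mu 1 ∈ semigroupGen (parabolicPair lam mu) :=
    hH ▸ GenBy.comp (GenBy.base (by simp [parabolicPair])) (GenBy.base (by simp [parabolicPair]))
  exact not_sdif_of_iterate_mDist_id_lt (fun k hk => iterate_mem_semigroupGen hmem hk)
    fun ε hε => exists_iterate_mDist_id_lt (by ring) (abs_lt.mpr ⟨by linarith, by linarith⟩) hε

lemma exists_mobiusFun_of_mem_of_pos {lam mu : ℝ} (hl : 0 < lam) (hm : 0 < mu) :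
    ∀ W ∈ semigroupGen (parabolicPair lam mu), ∃ a b c d : ℝ, a * d - b * c = 1 ∧ 1 ≤ a ∧
      1 ≤ d ∧ 0 ≤ b ∧ 0 ≤ c ∧ min lam mu ≤ b + c ∧ W = mobiusFun a b c d := by
  intro W hW
  induction hW with
  | base hf =>
    rcases hf with rfl | rfl
    · exact ⟨1, lam, 0, 1, by ring, le_rfl, le_rfl, hl.le, le_rfl, by simp, rfl⟩
    · exact ⟨1, 0, mu, 1, by ring, le_rfl, le_rfl, le_rfl, hm.le, by simp, rfl⟩
  | comp _ _ ihf ihg =>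
    obtain ⟨a, b, c, d, hdet, ha, hd, hb, hc, hbc, rfl⟩ := ihf
    obtain ⟨a', b', c', d', hdet', ha', hd', hb', hc', hbc', rfl⟩ := ihg
    refine ⟨_, _, _, _, ?_, ?_, ?_, ?_, ?_, ?_, mobiusFun_comp a b c d (by rw [hdet']; norm_num)⟩
    · linear_combination (a' * d' - b' * c') * hdet + hdet'
    all_goals nlinarith [mul_nonneg hb hc', mul_nonneg hc hb', mul_nonneg (sub_nonneg.2 ha) hb',
      mul_nonneg hb (sub_nonneg.2 hd'), mul_nonneg hc (sub_nonneg.2 ha'),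
      mul_nonneg (sub_nonneg.2 hd) hc']

lemma chordal_mobiusFun_I {a b c d : ℝ} (hdet : a * d - b * c = 1) :
    chordal (mobiusFun a b c d Complex.I) Complex.I =
      √(2 * ((b + c) ^ 2 + (a - d) ^ 2) / ((b + c) ^ 2 + (a - d) ^ 2 + 2)) := by
  set T := (b + c) ^ 2 + (a - d) ^ 2
  have hP : ‖(a : ℂ) * Complex.I + b‖ ^ 2 = b ^ 2 + a ^ 2 := by
    rw [add_comm, Complex.norm_add_mul_I, Real.sq_sqrt (by positivity)]
  have hQ : ‖(c : ℂ) * Complex.I + d‖ ^ 2 = d ^ 2 + c ^ 2 := by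
    rw [add_comm, Complex.norm_add_mul_I, Real.sq_sqrt (by positivity)]
  have hN : ‖(a : ℂ) * Complex.I + b - Complex.I * (c * Complex.I + d)‖ = √T := by
    rw [← Complex.norm_add_mul_I]
    congr 1
    push_cast
    linear_combination (-(c : ℂ)) * Complex.I_sq
  have hS : ‖(a : ℂ) * Complex.I + b‖ ^ 2 + ‖(c : ℂ) * Complex.I + d‖ ^ 2 = T + 2 := by
    rw [hP, hQ]
    linear_combination 2 * hdet
  have hPQ : (a : ℂ) * Complex.I + b ≠ 0 ∨ (c : ℂ) * Complex.I + d ≠ 0 := by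
    by_contra! h
    rw [h.1, h.2, norm_zero] at hS
    nlinarith [sq_nonneg (b + c), sq_nonneg (a - d)]
  rw [mobiusFun_some, chordal_proj_coe hPQ, hN, hS, Complex.norm_I,
    Real.sqrt_div' _ (by positivity), Real.sqrt_mul zero_le_two]
  have h2 : √2 * √2 = 2 := Real.mul_self_sqrt zero_le_two
  field_simp
  norm_num
  rw [mul_assoc, h2, mul_comm]

lemma hasUniformlyDisplacedPoint_of_pos {lam mu : ℝ} (hl : 0 < lam) (hm : 0 < mu) :
    HasUniformlyDisplacedPoint (semigroupGen (parabolicPair lam mu)) := by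
  set m := min lam mu
  have hm0 : 0 < m := lt_min hl hm
  refine ⟨Complex.I, √(2 * m ^ 2 / (m ^ 2 + 2)), by positivity, fun W hW => ?_⟩
  obtain ⟨a, b, c, d, hdet, -, -, hb, hc, hbc, rfl⟩ := exists_mobiusFun_of_mem_of_pos hl hm W hW
  rw [chordal_mobiusFun_I hdet]
  apply Real.sqrt_le_sqrt
  rw [div_le_div_iff₀ (by positivity) (by positivity)]
  nlinarith [sq_nonneg (a - d)]

lemma mobiusFun_ofReal (a b c d x : ℝ) :
    mobiusFun a b c d (x : ℂ) =
      if c * x + d = 0 then OnePoint.infty else (((a * x + b) / (c * x + d) : ℝ) : ℂ) := by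
  rw [mobiusFun_some, proj]
  norm_cast

def absorbingSet (lam : ℝ) : Set CHat :=
  {q | q = OnePoint.infty ∨ ∃ x : ℝ, q = (x : ℂ) ∧ (lam / 2 ≤ x ∨ -(lam / 2) ≤ x ∧ x ≤ 0)}

lemma translate_mem_absorbingSet {lam : ℝ} (hl : 0 < lam) {q : CHat}
    (hq : q ∈ absorbingSet lam ∨ q = ((-lam : ℝ) : ℂ)) :
    mobiusFun 1 lam 0 1 q ∈ absorbingSet lam := by
  rcases hq with (rfl | ⟨x, rfl, hx⟩) | rfl
  · left; simp [mobiusFun_infty, proj]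
  · refine Or.inr ⟨x + lam, by simp [mobiusFun_ofReal, add_comm], Or.inl ?_⟩
    rcases hx with hx | hx <;> linarith [hx]
  · exact Or.inr ⟨0, by rw [mobiusFun_ofReal]; simp, Or.inr ⟨by linarith, le_rfl⟩⟩

lemma dual_mem_absorbingSet {lam mu : ℝ} (hl : 0 < lam) (hm : mu < 0) (hlm : lam * mu ≤ -4)
    {q : CHat} (hq : q ∈ absorbingSet lam ∨ q = ((-lam : ℝ) : ℂ)) :
    mobiusFun 1 0 mu 1 q ∈ absorbingSet lam := by
  have key : ∀ x : ℝ, (lam / 2 ≤ x ∨ -lam ≤ x ∧ x ≤ 0) →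
      mobiusFun 1 0 mu 1 (x : ℂ) ∈ absorbingSet lam := by
    intro x hx
    rw [mobiusFun_ofReal]
    split_ifs with hden
    · exact Or.inl rfl
    refine Or.inr ⟨_, rfl, Or.inr ?_⟩
    simp only [one_mul, add_zero]
    rcases hx with hx | ⟨hx₁, hx₂⟩
    · have hD : mu * x + 1 < 0 := by nlinarith
      rw [le_div_iff_of_neg hD, div_nonpos_iff]
      exact ⟨by nlinarith, Or.inl ⟨by linarith, hD.le⟩⟩
    · have hD : 0 < mu * x + 1 := by nlinarith
      rw [le_div_iff₀ hD, div_nonpos_iff]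
      exact ⟨by nlinarith, Or.inr ⟨hx₂, hD.le⟩⟩
  rcases hq with (rfl | ⟨x, rfl, hx⟩) | rfl
  · refine Or.inr ⟨1 / mu, ?_, Or.inr ⟨?_, by simp [hm.le]⟩⟩
    · simp [mobiusFun_infty, proj, hm.ne]
    · rw [le_div_iff_of_neg hm]; nlinarith
  · exact key x (hx.imp_right fun h => ⟨by linarith [h.1], h.2⟩)
  · exact key _ (Or.inr ⟨le_rfl, by linarith⟩)

lemma chordal_ofReal (x y : ℝ) :
    chordal (x : ℂ) (y : ℂ) = √(4 * (x - y) ^ 2 / ((1 + x ^ 2) * (1 + y ^ 2))) := by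
  show 2 * ‖(x : ℂ) - y‖ / (√(1 + ‖(x : ℂ)‖ ^ 2) * √(1 + ‖(y : ℂ)‖ ^ 2)) = _
  rw [← Complex.ofReal_sub, Complex.norm_real, Complex.norm_real, Complex.norm_real,
    Real.norm_eq_abs, Real.norm_eq_abs, Real.norm_eq_abs, sq_abs, sq_abs,
    Real.sqrt_div' _ (by positivity), Real.sqrt_mul zero_le_four,
    Real.sqrt_mul (by positivity : (0 : ℝ) ≤ 1 + x ^ 2),
    Real.sqrt_sq_eq_abs, show (4 : ℝ) = 2 ^ 2 by norm_num, Real.sqrt_sq zero_le_two]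

lemma chordal_infty_ofReal (y : ℝ) : chordal OnePoint.infty (y : ℂ) = √(4 / (1 + y ^ 2)) := by
  show 2 / √(1 + ‖(y : ℂ)‖ ^ 2) = _
  rw [Complex.norm_real, Real.norm_eq_abs, sq_abs, Real.sqrt_div' _ (by positivity),
    show (4 : ℝ) = 2 ^ 2 by norm_num, Real.sqrt_sq zero_le_two]

lemma le_chordal_of_mem_absorbingSet {lam : ℝ} (hl : 0 < lam) {q : CHat}
    (hq : q ∈ absorbingSet lam) :
    √(4 * lam ^ 2 / ((1 + lam ^ 2) * (lam ^ 2 + 4))) ≤ chordal q ((-lam : ℝ) : ℂ) := by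
  rcases hq with rfl | ⟨x, rfl, hx⟩
  · rw [chordal_infty_ofReal]
    apply Real.sqrt_le_sqrt
    rw [div_le_div_iff₀ (by positivity) (by positivity)]
    nlinarith [sq_nonneg lam]
  · have hx' : -(lam / 2) ≤ x := by rcases hx with hx | hx <;> linarith [hx]
    rw [chordal_ofReal]
    apply Real.sqrt_le_sqrt
    rw [div_le_div_iff₀ (by positivity) (by positivity)]
    -- the difference of the two sides is `4 (x + λ/2) (x + λ(λ² + 3)/2)`, which vanishes at the
    -- nearest point `x = -λ/2` of the set
    have key : lam ^ 2 * (1 + x ^ 2) ≤ (lam ^ 2 + 4) * (x + lam) ^ 2 := by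
      nlinarith [mul_nonneg (by linarith : (0 : ℝ) ≤ x + lam / 2)
        (by nlinarith : (0 : ℝ) ≤ x + lam * (lam ^ 2 + 3) / 2)]
    nlinarith [mul_le_mul_of_nonneg_left key (by positivity : (0 : ℝ) ≤ 4 * (1 + lam ^ 2))]

lemma hasUniformlyDisplacedPoint_of_mul_le {lam mu : ℝ} (hl : 0 < lam) (hm : mu < 0)
    (hlm : lam * mu ≤ -4) : HasUniformlyDisplacedPoint (semigroupGen (parabolicPair lam mu)) := by
  have hgen : ∀ f ∈ parabolicPair lam mu, Set.MapsTo f (absorbingSet lam) (absorbingSet lam) ∧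
      f ((-lam : ℝ) : ℂ) ∈ absorbingSet lam := by
    rintro f (rfl | rfl)
    · exact ⟨fun q hq => translate_mem_absorbingSet hl (Or.inl hq),
        translate_mem_absorbingSet hl (Or.inr rfl)⟩
    · exact ⟨fun q hq => dual_mem_absorbingSet hl hm hlm (Or.inl hq),
        dual_mem_absorbingSet hl hm hlm (Or.inr rfl)⟩
  exact ⟨_, _, by positivity, fun W hW =>
    le_chordal_of_mem_absorbingSet hl (semigroupGen_mapsTo hgen W hW).2⟩

lemma negConj_mem_semigroupGen {lam mu : ℝ} {W : MoebMap}
    (hW : W ∈ semigroupGen (parabolicPair lam mu)) :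
    negConj W ∈ semigroupGen (parabolicPair (-lam) (-mu)) := by
  induction hW with
  | base hf =>
    refine GenBy.base ?_
    rcases hf with rfl | rfl <;> simp [parabolicPair, negConj_mobiusFun]
  | comp _ _ ihf ihg => exact negConj_comp _ _ ▸ GenBy.comp ihf ihg

lemma HasUniformlyDisplacedPoint.of_neg {lam mu : ℝ}
    (h : HasUniformlyDisplacedPoint (semigroupGen (parabolicPair (-lam) (-mu)))) :
    HasUniformlyDisplacedPoint (semigroupGen (parabolicPair lam mu)) := by
  obtain ⟨z₀, ε, hε, hdisp⟩ := h
  refine ⟨z₀.map Neg.neg, ε, hε, fun W hW => ?_⟩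
  calc ε ≤ chordal (negConj W z₀) z₀ := hdisp _ (negConj_mem_semigroupGen hW)
    _ = chordal (W (z₀.map Neg.neg)) (z₀.map Neg.neg) := by
      rw [← chordal_map_neg, negConj, map_neg_map_neg]

lemma hasUniformlyDisplacedPoint_of_mul_not_mem_Ioc {lam mu : ℝ}
    (h : ¬ (-4 < lam * mu ∧ lam * mu ≤ 0)) :
    HasUniformlyDisplacedPoint (semigroupGen (parabolicPair lam mu)) := by
  wlog hl : 0 < lam generalizing lam mu with H
  · have hl' : lam < 0 := lt_of_le_of_ne (not_lt.mp hl) (by rintro rfl; simp at h)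
    exact (H (by rwa [neg_mul_neg]) (neg_pos.mpr hl')).of_neg
  rcases lt_or_gt_of_ne (show mu ≠ 0 by rintro rfl; simp at h) with hm | hm
  · exact hasUniformlyDisplacedPoint_of_mul_le hl hm (by by_contra! h'; exact h ⟨h', by nlinarith⟩)
  · exact hasUniformlyDisplacedPoint_of_pos hl hm

/-- Corollary cia: for f(z) = z + λ and g(z) = z/(μz+1), the semigroup
generated by f and g is semidiscrete and inverse free if and only if
λμ ∉ (−4, 0]. -/
theorem statement18 (lam mu : ℝ) :
    SDIF (semigroupGen {mobiusFun 1 lam 0 1, mobiusFun 1 0 mu 1}) ↔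
      ¬ (-4 < lam * mu ∧ lam * mu ≤ 0) := by
  refine ⟨fun hS ⟨h₁, h₂⟩ => ?_, fun h => ?_⟩
  · rcases h₂.lt_or_eq with h₂ | h₂
    · exact not_sdif_of_mul_mem_Ioo h₁ h₂ hS
    · exact not_inverseFree_of_mul_eq_zero h₂ hS.2
  · exact (hasUniformlyDisplacedPoint_of_mul_not_mem_Ioc h).sdif fun f hf g hg => GenBy.comp hf hg

end MobiusSG

end
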